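/- arXiv:2006.03137 — 2 statements merged into one kernel-verified Lean document; each statement's English description precedes it below -/
import Mathlib

section
/- Let 0 < t ≤ 1. If the tuple Δ_t(T) = (P^t V_1 P^{1−t}, …, P^t V_d P^{1−t}) is right invertible, then the positive operator P is invertible, and moreover the tuple T is right invertible. -/
/-!
If `Δₜ(T)` is right invertible, then so is the single operator `Pᵗ`, since
`∑ Pᵗ Vᵢ P¹⁻ᵗ Bᵢ = Pᵗ (∑ Vᵢ P¹⁻ᵗ Bᵢ)`. A self-adjoint operator with a right inverse is
invertible, and `t ≠ 0` makes `P` invertible together with `Pᵗ`. Cancelling the invertible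
factor `Pᵗ` on the left and trading `P¹⁻ᵗ` for `P` on the right then turns a right inverse of
`Δₜ(T)` into one of `(Vᵢ P)ᵢ = T`.
-/

open Finset

section Tuple

variable {R ι : Type*} [Ring R] [Fintype ι]

def IsRightInvertibleTuple (S : ι → R) : Prop :=
  ∃ B : ι → R, ∑ i, S i * B i = 1

namespace IsRightInvertibleTuple

variable {S : ι → R} {a : R}

lemma exists_mul_eq_one_of_mul_left (h : IsRightInvertibleTuple fun i => a * S i) :
    ∃ x, a * x = 1 := by
  obtain ⟨B, hB⟩ := h
  exact ⟨∑ i, S i * B i, by simpa only [mul_sum, mul_assoc] using hB⟩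

lemma of_mul_left (ha : IsUnit a) (h : IsRightInvertibleTuple fun i => a * S i) :
    IsRightInvertibleTuple S := by
  obtain ⟨B, hB⟩ := h
  have hleft : a * ∑ i, S i * B i = 1 := by simpa only [mul_sum, mul_assoc] using hB
  have hright : (∑ i, S i * B i) * a = 1 := by
    rw [← ha.unit_spec] at hleft ⊢
    rw [← Units.inv_eq_of_mul_eq_one_right hleft, Units.inv_mul]
  exact ⟨fun i => B i * a, by simpa only [sum_mul, mul_assoc] using hright⟩

lemma mul_right_of_isUnit {c p : R} (h : IsRightInvertibleTuple fun i => S i * c)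
    (hp : IsUnit p) : IsRightInvertibleTuple fun i => S i * p := by
  obtain ⟨B, hB⟩ := h
  refine ⟨fun i => ↑hp.unit⁻¹ * c * B i, ?_⟩
  convert hB using 2 with i
  rw [← mul_assoc, ← mul_assoc, mul_assoc (S i), IsUnit.mul_val_inv, mul_one, mul_assoc]

end IsRightInvertibleTuple

end Tuple

lemma IsSelfAdjoint.isUnit_of_mul_eq_one {R : Type*} [Monoid R] [StarMul R] {a b : R}
    (ha : IsSelfAdjoint a) (h : a * b = 1) : IsUnit a := by
  have hstar : star b * a = 1 := by
    simpa only [star_mul, star_one, ha.star_eq] using congrArg star h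
  have hb : star b = b := left_inv_eq_right_inv hstar h
  exact ⟨⟨a, b, h, hb ▸ hstar⟩, rfl⟩

section Aluthge

variable {A ι : Type*} [CStarAlgebra A] [PartialOrder A] [StarOrderedRing A] [Fintype ι]

noncomputable def aluthgeTuple (P : A) (V : ι → A) (t : ℝ) : ι → A :=
  fun i => P ^ t * V i * P ^ (1 - t)

variable {P : A} {V : ι → A} {t : ℝ}

lemma isRightInvertibleTuple_aluthgeTuple_iff :
    IsRightInvertibleTuple (aluthgeTuple P V t) ↔
      IsRightInvertibleTuple fun i => P ^ t * (V i * P ^ (1 - t)) := by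
  simp only [IsRightInvertibleTuple, aluthgeTuple, mul_assoc]

lemma isUnit_rpow_of_isRightInvertibleTuple_aluthgeTuple
    (h : IsRightInvertibleTuple (aluthgeTuple P V t)) : IsUnit (P ^ t) := by
  obtain ⟨x, hx⟩ :=
    (isRightInvertibleTuple_aluthgeTuple_iff.mp h).exists_mul_eq_one_of_mul_left
  exact (IsSelfAdjoint.of_nonneg CFC.rpow_nonneg).isUnit_of_mul_eq_one hx

lemma isUnit_of_isRightInvertibleTuple_aluthgeTuple (hP : 0 ≤ P) (ht : t ≠ 0)
    (h : IsRightInvertibleTuple (aluthgeTuple P V t)) : IsUnit P :=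
  (CFC.isUnit_rpow_iff P t ht hP).mp (isUnit_rpow_of_isRightInvertibleTuple_aluthgeTuple h)

lemma IsRightInvertibleTuple.mul_of_aluthgeTuple (hP : 0 ≤ P) (ht : t ≠ 0)
    (h : IsRightInvertibleTuple (aluthgeTuple P V t)) :
    IsRightInvertibleTuple fun i => V i * P :=
  ((isRightInvertibleTuple_aluthgeTuple_iff.mp h).of_mul_left
    (isUnit_rpow_of_isRightInvertibleTuple_aluthgeTuple h)).mul_right_of_isUnit
    (isUnit_of_isRightInvertibleTuple_aluthgeTuple hP ht h)

end Aluthge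

theorem right_invertibility_of_spherical_aluthge_general
    {H : Type*} [NormedAddCommGroup H] [InnerProductSpace ℂ H] [CompleteSpace H]
    {d : ℕ} (T V : Fin d → H →L[ℂ] H) (P : H →L[ℂ] H)
    (hPpos : 0 ≤ P)
    (hpolar : ∀ i, T i = V i * P)
    (t : ℝ) (ht0 : 0 < t)
    (hright : ∃ B : Fin d → H →L[ℂ] H,
      ∑ i, (CFC.rpow P t * V i * CFC.rpow P (1 - t)) * B i = 1) :
    IsUnit P ∧ ∃ B : Fin d → H →L[ℂ] H, ∑ i, T i * B i = 1 := by
  have hΔ : IsRightInvertibleTuple (aluthgeTuple P V t) := hright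
  have hT : T = fun i => V i * P := funext hpolar
  exact ⟨isUnit_of_isRightInvertibleTuple_aluthgeTuple hPpos ht0.ne' hΔ,
    hT ▸ hΔ.mul_of_aluthgeTuple hPpos ht0.ne'⟩

/-- For `0 < t ≤ 1`: if `Δₜ(T)` is right invertible, then `P` is invertible and `T` is
right invertible. -/
theorem right_invertibility_of_spherical_aluthge
    {H : Type*} [NormedAddCommGroup H] [InnerProductSpace ℂ H] [CompleteSpace H]
    {d : ℕ} (hd : 1 ≤ d) (T V : Fin d → H →L[ℂ] H) (P : H →L[ℂ] H)
    (hcomm : ∀ i j, T i * T j = T j * T i)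
    (hPpos : 0 ≤ P)
    (hP2 : P * P = ∑ i, star (T i) * T i)
    (hpolar : ∀ i, T i = V i * P)
    (hproj : ∑ i, star (V i) * V i =
      ((LinearMap.ker (P : H →ₗ[ℂ] H))ᗮ).subtypeL.comp
        (Submodule.orthogonalProjectionOnto (LinearMap.ker (P : H →ₗ[ℂ] H))ᗮ))
    (t : ℝ) (ht0 : 0 < t) (ht1 : t ≤ 1)
    (hright : ∃ B : Fin d → H →L[ℂ] H,
      ∑ i, (CFC.rpow P t * V i * CFC.rpow P (1 - t)) * B i = 1) :
    IsUnit P ∧ ∃ B : Fin d → H →L[ℂ] H, ∑ i, T i * B i = 1 :=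
  right_invertibility_of_spherical_aluthge_general T V P hPpos hpolar t ht0 hright
end

section
/- Let 0 ≤ t ≤ 1. The joint point spectra of T and Δ_t(T) coincide: for every λ = (λ_1, …, λ_d) ∈ ℂ^d, there exists a nonzero vector x ∈ H with T_i x = λ_i x for all i ∈ {1, …, d} if and only if there exists a nonzero vector y ∈ H with P^t V_i P^{1−t} y = λ_i y for all i ∈ {1, …, d}. -/
/-!
Write `T i = X i * Y` with `X i = V i * P ^ (1 - t)` and `Y = P ^ t`, so that the Aluthge
transform is `Y * X i`. For `λ ≠ 0` the classical argument that `AB` and `BA` share their nonzero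
eigenvalues works for joint eigenvectors: `x ↦ Y x` and `y ↦ X i₀ y` (with `λ i₀ ≠ 0`) exchange
them, the second map because `y` lies in the range of `Y` and the `T i` commute.
For `λ = 0` both joint kernels are nontrivial exactly when `ker P` is: `‖P x‖² = ∑ ‖T i x‖²`, and
the `V i` vanish jointly exactly on `ker P` since `∑ (V i)⋆ V i` projects onto `(ker P)ᗮ`.
-/

open scoped NNReal

namespace CFC

variable {A : Type*} [PartialOrder A] [Ring A] [StarRing A] [TopologicalSpace A]
  [StarOrderedRing A] [Algebra ℝ A] [ContinuousFunctionalCalculus ℝ A IsSelfAdjoint]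
  [NonnegSpectrumClass ℝ A]

lemma rpow_add_of_nonneg {a : A} {x y : ℝ} (hx : 0 ≤ x) (hy : 0 ≤ y)
    (ha : 0 ≤ a := by cfc_tac) :
    a ^ (x + y) = a ^ x * a ^ y := by
  rcases hx.eq_or_lt with rfl | hx
  · simp [rpow_zero a]
  rcases hy.eq_or_lt with rfl | hy
  · simp [rpow_zero a]
  simp only [rpow_def]
  rw [← cfc_mul _ _ a]
  exact cfc_congr fun z _ => NNReal.rpow_add' (add_pos hx hy).ne' z

lemma commute_self_rpow (a : A) (y : ℝ) (ha : 0 ≤ a := by cfc_tac) : Commute a (a ^ y) := by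
  nth_rw 1 [← cfc_id' ℝ≥0 a]
  exact cfc_commute_cfc _ _ a

lemma rpow_one_sub_mul_rpow {a : A} {s : ℝ} (hs0 : 0 ≤ s) (hs1 : s ≤ 1)
    (ha : 0 ≤ a := by cfc_tac) : a ^ (1 - s) * a ^ s = a := by
  rw [← rpow_add_of_nonneg (sub_nonneg.mpr hs1) hs0, sub_add_cancel, rpow_one a]

end CFC

section JointEigenvector

variable {K M ι : Type*} [DivisionRing K] [AddCommGroup M] [Module K M]

theorem exists_joint_eigenvector_comp_swap_iff (X : ι → M →ₗ[K] M) (Y : M →ₗ[K] M)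
    (hcomm : ∀ i j x, X i (Y (X j (Y x))) = X j (Y (X i (Y x)))) {lam : ι → K} (hlam : lam ≠ 0) :
    (∃ x ≠ 0, ∀ i, X i (Y x) = lam i • x) ↔ ∃ y ≠ 0, ∀ i, Y (X i y) = lam i • y := by
  obtain ⟨i₀, hi₀⟩ := Function.ne_iff.mp hlam
  constructor
  · rintro ⟨x, hx0, hx⟩
    refine ⟨Y x, fun hYx => ?_, fun i => by rw [hx, map_smul]⟩
    have h := hx i₀
    rw [hYx, map_zero, eq_comm, smul_eq_zero] at h
    exact h.elim hi₀ hx0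
  · rintro ⟨y, hy0, hy⟩
    obtain ⟨z, rfl⟩ : ∃ z, y = Y z :=
      ⟨(lam i₀)⁻¹ • X i₀ y, by rw [map_smul, hy, smul_smul, inv_mul_cancel₀ hi₀, one_smul]⟩
    refine ⟨X i₀ (Y z), fun hx => ?_, fun j => ?_⟩
    · have h := hy i₀
      rw [hx, map_zero, eq_comm, smul_eq_zero] at h
      exact h.elim hi₀ hy0
    · rw [hcomm, hy, map_smul]

end JointEigenvector

namespace ContinuousLinearMap

variable {𝕜 E ι : Type*} [RCLike 𝕜] [NormedAddCommGroup E] [InnerProductSpace 𝕜 E]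
  [CompleteSpace E] [Fintype ι]

lemma forall_apply_eq_zero_iff_of_star_mul_self_eq_sum {A : E →L[𝕜] E} {B : ι → E →L[𝕜] E}
    (h : star A * A = ∑ i, star (B i) * B i) (x : E) :
    (∀ i, B i x = 0) ↔ A x = 0 := by
  have hnorm : ‖A x‖ ^ 2 = ∑ i, ‖B i x‖ ^ 2 := by
    simp only [apply_norm_sq_eq_inner_adjoint_left, ← star_eq_adjoint]
    rw [← mul_def, h, sum_apply, sum_inner, map_sum]
    rfl
  rw [← norm_eq_zero, ← sq_eq_zero_iff, hnorm,
    Finset.sum_eq_zero_iff_of_nonneg fun i _ => sq_nonneg _]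
  simp

lemma forall_apply_eq_zero_iff_mem_orthogonal {V : ι → E →L[𝕜] E} {K : Submodule 𝕜 E}
    [K.HasOrthogonalProjection] (h : ∑ i, star (V i) * V i = K.starProjection) (x : E) :
    (∀ i, V i x = 0) ↔ x ∈ Kᗮ := by
  have hK : star K.starProjection * K.starProjection = ∑ i, star (V i) * V i := by
    rw [h, isStarProjection_starProjection.isSelfAdjoint.star_eq,
      isStarProjection_starProjection.isIdempotentElem.eq]
  rw [forall_apply_eq_zero_iff_of_star_mul_self_eq_sum hK,
    Submodule.starProjection_apply_eq_zero_iff]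

end ContinuousLinearMap

section Operator

variable {H : Type*} [NormedAddCommGroup H] [InnerProductSpace ℂ H] [CompleteSpace H]
  {P : H →L[ℂ] H}

lemma apply_eq_zero_of_rpow_apply_eq_zero (hP : 0 ≤ P) {s : ℝ} (hs0 : 0 ≤ s) (hs1 : s ≤ 1)
    {x : H} (hx : (P ^ s) x = 0) : P x = 0 := by
  rw [← CFC.rpow_one_sub_mul_rpow hs0 hs1 hP, mul_apply_eq_comp, hx, map_zero]

lemma apply_rpow_apply_eq_zero (hP : 0 ≤ P) (s : ℝ) {x : H} (hx : P x = 0) :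
    P ((P ^ s) x) = 0 := by
  rw [← mul_apply_eq_comp, (CFC.commute_self_rpow P s).eq,
    mul_apply_eq_comp, hx, map_zero]

theorem exists_ne_zero_rpow_mul_mul_rpow_apply_eq_zero_iff {ι : Type*} (hP : 0 ≤ P)
    {V : ι → H →L[ℂ] H} (hV : ∀ x, (∀ i, V i x = 0) ↔ P x = 0) {t : ℝ}
    (ht0 : 0 ≤ t) (ht1 : t ≤ 1) :
    (∃ y ≠ 0, ∀ i, (P ^ t * V i * P ^ (1 - t)) y = 0) ↔ ∃ x ≠ 0, P x = 0 := by
  simp only [mul_apply_eq_comp]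
  constructor
  · rintro ⟨y, hy0, hy⟩
    by_contra! hker
    have hinj (x : H) : P x = 0 → x = 0 := not_imp_not.mp (hker x)
    have hVw : ∀ i, V i ((P ^ (1 - t)) y) = 0 := fun i =>
      hinj _ (apply_eq_zero_of_rpow_apply_eq_zero hP ht0 ht1 (hy i))
    have hw : (P ^ (1 - t)) y = 0 := hinj _ ((hV _).mp hVw)
    exact hy0 (hinj _ (apply_eq_zero_of_rpow_apply_eq_zero hP (by linarith) (by linarith) hw))
  · rintro ⟨x, hx0, hx⟩
    exact ⟨x, hx0, fun i => by rw [(hV _).mpr (apply_rpow_apply_eq_zero hP _ hx), map_zero]⟩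

end Operator

theorem point_spectrum_of_spherical_aluthge_general
    {H : Type*} [NormedAddCommGroup H] [InnerProductSpace ℂ H] [CompleteSpace H]
    {d : ℕ} (T V : Fin d → H →L[ℂ] H) (P : H →L[ℂ] H)
    (hcomm : ∀ i j, T i * T j = T j * T i)
    (hPpos : 0 ≤ P)
    (hP2 : P * P = ∑ i, star (T i) * T i)
    (hpolar : ∀ i, T i = V i * P)
    (hproj : ∑ i, star (V i) * V i =
      ((LinearMap.ker (P : H →ₗ[ℂ] H))ᗮ).subtypeL.comp
        (Submodule.orthogonalProjectionOnto (LinearMap.ker (P : H →ₗ[ℂ] H))ᗮ))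
    (t : ℝ) (ht0 : 0 ≤ t) (ht1 : t ≤ 1) (lam : Fin d → ℂ) :
    (∃ x : H, x ≠ 0 ∧ ∀ i, T i x = lam i • x) ↔
      (∃ y : H, y ≠ 0 ∧ ∀ i, (CFC.rpow P t * V i * CFC.rpow P (1 - t)) y = lam i • y) := by
  simp only [CFC.rpow_eq_pow]
  have hV (x : H) : (∀ i, V i x = 0) ↔ P x = 0 := by
    rw [ContinuousLinearMap.forall_apply_eq_zero_iff_mem_orthogonal hproj,
      Submodule.orthogonal_orthogonal_eq_closure,
      (ContinuousLinearMap.isClosed_ker P).submodule_topologicalClosure_eq]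
    exact LinearMap.mem_ker
  have hT (x : H) : (∀ i, T i x = 0) ↔ P x = 0 :=
    ContinuousLinearMap.forall_apply_eq_zero_iff_of_star_mul_self_eq_sum
      (by rw [hPpos.isSelfAdjoint.star_eq, hP2]) x
  have hfac (i : Fin d) : T i = V i * P ^ (1 - t) * P ^ t := by
    rw [hpolar, mul_assoc, CFC.rpow_one_sub_mul_rpow ht0 ht1 hPpos]
  rcases eq_or_ne lam 0 with rfl | hlam
  · simp only [Pi.zero_apply, zero_smul, hT]
    exact (exists_ne_zero_rpow_mul_mul_rpow_apply_eq_zero_iff hPpos hV ht0 ht1).symm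
  · simp only [hfac, mul_apply_eq_comp]
    refine exists_joint_eigenvector_comp_swap_iff
      (fun i => ((V i * P ^ (1 - t) : H →L[ℂ] H) : H →ₗ[ℂ] H)) ((P ^ t : H →L[ℂ] H) : H →ₗ[ℂ] H)
      (fun i j x => ?_) hlam
    simpa only [hfac, mul_apply_eq_comp, ContinuousLinearMap.coe_coe] using congr($(hcomm i j) x)

/-- For `0 ≤ t ≤ 1`: the joint point spectra of `T` and `Δₜ(T)` coincide. -/
theorem point_spectrum_of_spherical_aluthge
    {H : Type*} [NormedAddCommGroup H] [InnerProductSpace ℂ H] [CompleteSpace H]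
    {d : ℕ} (hd : 1 ≤ d) (T V : Fin d → H →L[ℂ] H) (P : H →L[ℂ] H)
    (hcomm : ∀ i j, T i * T j = T j * T i)
    (hPpos : 0 ≤ P)
    (hP2 : P * P = ∑ i, star (T i) * T i)
    (hpolar : ∀ i, T i = V i * P)
    (hproj : ∑ i, star (V i) * V i =
      ((LinearMap.ker (P : H →ₗ[ℂ] H))ᗮ).subtypeL.comp
        (Submodule.orthogonalProjectionOnto (LinearMap.ker (P : H →ₗ[ℂ] H))ᗮ))
    (t : ℝ) (ht0 : 0 ≤ t) (ht1 : t ≤ 1) (lam : Fin d → ℂ) :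
    (∃ x : H, x ≠ 0 ∧ ∀ i, T i x = lam i • x) ↔
      (∃ y : H, y ≠ 0 ∧ ∀ i, (CFC.rpow P t * V i * CFC.rpow P (1 - t)) y = lam i • y) :=
  point_spectrum_of_spherical_aluthge_general T V P hcomm hPpos hP2 hpolar hproj t ht0 ht1 lam
end
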